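/- Assume additionally that λ < a and λ < h. Then for every ε > 0 there exists y′ < y_∞ such that for every y ∈ (y′, y_∞) not equal to any y_k and every x ∈ (0,π): (a) 1/L(y) < ε; (b) |∂₁ψ(x,y)·∂₂ψ(x,y)| / (√(1 + ∂₁ψ(x,y)² + ∂₂ψ(x,y)²)·L(y)) < ε; and (c) |L(y)·∂_y L(x,y) − L(x,y)·∂_y L(y)| / L(y)² < ε. (These three quantities are the coefficients of the pulled-back 1-form ω_M in an orthonormal tangent frame of the graph of ψ; hence ω_M tends to 0 uniformly as y → y_∞ and extends continuously by 0.) -/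

import Mathlib

/-!
On the strip `y_k < y < y_{k+1}` the slope `∂₁ψ(·, y)` is a convex combination of
`(h/λ)^k cos(t/λ^k)` and `(h/λ)^(k+1) cos(t/λ^(k+1))`. These cosines are orthogonal on `[0, π]`
because `1/λ` is an integer, so projecting `∂₁ψ` onto one of them gives `L(y) ≥ (π/4)(h/λ)^k`;
this bounds (a) by `(λ/h)^k`, and, as `|∂₂ψ| ≲ h^k/a^(k+1)`, (b) by `(λ/a)^k`.
For (c), `∂_y L(x,y)` is `φ_k'(y)` times `∫_0^x` of a function of period `2πλ^k`, as is `L(x,y)`;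
so both are `x` times a mean up to an error of order `λ^k`, the means cancel in
`L(y) ∂_y L(x,y) - L(x,y) ∂_y L(y)`, and what is left is `O((h/λ)^(2k) λ^k / a^k)`,
i.e. `O((λ/a)^k)` after division by `L(y)^2`.
-/

open Real MeasureTheory Set Filter

noncomputable section

namespace StokesCounterexample

/-- `ySeq a k = Σ_{j=1}^k a^j` (so `ySeq a 0 = 0`). -/
def ySeq (a : ℝ) (k : ℕ) : ℝ := ∑ j ∈ Finset.range k, a ^ (j + 1)

/-- `yInf a = Σ_{j=1}^∞ a^j = a / (1 - a)`. -/
def yInf (a : ℝ) : ℝ := a / (1 - a)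

/-- `fSeq h l 0 = 0` and `fSeq h l k x = h^k · sin (x / l^k)` for `k ≥ 1`. -/
def fSeq (h l : ℝ) (k : ℕ) (x : ℝ) : ℝ :=
  if k = 0 then 0 else h ^ k * Real.sin (x / l ^ k)

open Classical in
/-- The interpolation `ψ(x,y) = (1 - φ_k(y))·f_k(x) + φ_k(y)·f_{k+1}(x)` for
`y ∈ [y_k, y_{k+1})`, where `φ_k(y) = φ((y - y_k)/a^(k+1))`, extended by `0`
outside of `⋃_k [y_k, y_{k+1})` (in particular `ψ(x, y_∞) = 0`). -/
def psi (a h l : ℝ) (φ : ℝ → ℝ) (x y : ℝ) : ℝ :=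
  if hk : ∃ k : ℕ, ySeq a k ≤ y ∧ y < ySeq a (k + 1) then
    (1 - φ ((y - ySeq a hk.choose) / a ^ (hk.choose + 1))) * fSeq h l hk.choose x
      + φ ((y - ySeq a hk.choose) / a ^ (hk.choose + 1)) * fSeq h l (hk.choose + 1) x
  else 0

/-- The partial derivative of `ψ` in the first variable. -/
def psi₁ (a h l : ℝ) (φ : ℝ → ℝ) (x y : ℝ) : ℝ :=
  deriv (fun t => psi a h l φ t y) x

/-- The partial derivative of `ψ` in the second variable. -/
def psi₂ (a h l : ℝ) (φ : ℝ → ℝ) (x y : ℝ) : ℝ :=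
  deriv (fun s => psi a h l φ x s) y

/-- The arc length `L(x,y) = ∫_0^x √(1 + (∂₁ψ(t,y))²) dt`. -/
def arc (a h l : ℝ) (φ : ℝ → ℝ) (x y : ℝ) : ℝ :=
  ∫ t in (0:ℝ)..x, Real.sqrt (1 + psi₁ a h l φ t y ^ 2)

/-- The length `L(y) = L(π, y)` of the section of the graph of `ψ` at height `y`. -/
def len (a h l : ℝ) (φ : ℝ → ℝ) (y : ℝ) : ℝ := arc a h l φ π y

open Function
open scoped Topology

section PeriodicIntegral

variable {f g : ℝ → ℝ} {T : ℝ}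

lemma abs_intervalIntegral_le_of_abs_le {M : ℝ} (hM : ∀ t, |f t| ≤ M) (a b : ℝ) :
    |∫ t in a..b, f t| ≤ M * |b - a| := by
  simpa using intervalIntegral.norm_integral_le_of_norm_le_const (f := f) fun t _ => hM t

lemma abs_intervalIntegral_sub_mean_le (hT : 0 < T) (hf : Continuous f) (hper : Periodic f T)
    {M : ℝ} (hM : ∀ t, |f t| ≤ M) {x : ℝ} (hx : 0 ≤ x) :
    |(∫ t in 0..x, f t) - x / T * ∫ t in 0..T, f t| ≤ 2 * T * M := by
  set n : ℕ := ⌊x / T⌋₊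
  have hn : (n : ℝ) ≤ x / T ∧ x / T < n + 1 :=
    ⟨Nat.floor_le (div_nonneg hx hT.le), Nat.lt_floor_add_one _⟩
  have hnx : (n : ℝ) * T ≤ x ∧ x - n * T ≤ T := by
    rw [le_div_iff₀ hT, div_lt_iff₀ hT] at hn
    constructor <;> linarith
  have hint : ∀ a b, IntervalIntegrable f volume a b := fun a b => hf.intervalIntegrable a b
  have hsplit : (∫ t in 0..x, f t) = n * (∫ t in 0..T, f t) + ∫ t in n * T..x, f t := by
    have hmul := hper.intervalIntegral_add_zsmul_eq n 0 hint
    simp only [zero_add, zsmul_eq_mul, Int.cast_natCast] at hmul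
    rw [← hmul, intervalIntegral.integral_add_adjacent_intervals (hint _ _) (hint _ _)]
  have hM0 : 0 ≤ M := (abs_nonneg _).trans (hM 0)
  have hper_int : |∫ t in 0..T, f t| ≤ T * M := by
    simpa [abs_of_pos hT, mul_comm] using abs_intervalIntegral_le_of_abs_le hM 0 T
  have hrest : |∫ t in n * T..x, f t| ≤ T * M := by
    calc _ ≤ M * |x - n * T| := abs_intervalIntegral_le_of_abs_le hM _ _
      _ ≤ M * T := by rw [abs_of_nonneg (by linarith)]; gcongr; linarith
      _ = T * M := mul_comm _ _
  have hfrac : |(n : ℝ) - x / T| ≤ 1 := abs_le.2 ⟨by linarith, by linarith⟩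
  calc |(∫ t in 0..x, f t) - x / T * ∫ t in 0..T, f t|
      = |((n : ℝ) - x / T) * (∫ t in 0..T, f t) + ∫ t in n * T..x, f t| := by
        rw [hsplit]; ring_nf
    _ ≤ 1 * (T * M) + T * M := by
        refine (abs_add_le _ _).trans (add_le_add ?_ hrest)
        rw [abs_mul]; exact mul_le_mul hfrac hper_int (abs_nonneg _) zero_le_one
    _ = 2 * T * M := by ring

/-- The means of `f` and `g` cancel in the cross term, so only the one-period errors remain. -/
lemma abs_integral_mul_integral_sub_le (hT : 0 < T)
    (hf : Continuous f) (hf_per : Periodic f T) {Mf : ℝ} (hMf : ∀ t, |f t| ≤ Mf)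
    (hg : Continuous g) (hg_per : Periodic g T) {Mg : ℝ} (hMg : ∀ t, |g t| ≤ Mg)
    {x b : ℝ} (hx : 0 ≤ x) (hxb : x ≤ b) :
    |(∫ t in 0..b, g t) * (∫ t in 0..x, f t) - (∫ t in 0..x, g t) * ∫ t in 0..b, f t|
      ≤ 8 * b * T * Mf * Mg := by
  have hb : 0 ≤ b := hx.trans hxb
  have hMf0 : 0 ≤ Mf := (abs_nonneg _).trans (hMf 0)
  have hMg0 : 0 ≤ Mg := (abs_nonneg _).trans (hMg 0)
  set I := ∫ t in 0..T, f t
  set J := ∫ t in 0..T, g t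
  set Db := ∫ t in 0..b, f t
  set Dx := ∫ t in 0..x, f t
  set Lb := ∫ t in 0..b, g t
  set Lx := ∫ t in 0..x, g t
  have eDx := abs_intervalIntegral_sub_mean_le hT hf hf_per hMf hx
  have eDb := abs_intervalIntegral_sub_mean_le hT hf hf_per hMf hb
  have eLx := abs_intervalIntegral_sub_mean_le hT hg hg_per hMg hx
  have eLb := abs_intervalIntegral_sub_mean_le hT hg hg_per hMg hb
  have hI : |I / T| ≤ Mf := by
    rw [abs_div, abs_of_pos hT, div_le_iff₀ hT]
    simpa [abs_of_pos hT, mul_comm] using abs_intervalIntegral_le_of_abs_le hMf 0 T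
  have hLb : |Lb| ≤ b * Mg := by
    simpa [abs_of_nonneg hb, mul_comm] using abs_intervalIntegral_le_of_abs_le hMg 0 b
  have hLx : |Lx| ≤ b * Mg := by
    refine (abs_intervalIntegral_le_of_abs_le hMg 0 x).trans ?_
    rw [sub_zero, abs_of_nonneg hx, mul_comm]; gcongr
  have hmean : |x * (Lb - b / T * J) - b * (Lx - x / T * J)| ≤ b * (4 * T * Mg) := by
    refine (abs_sub _ _).trans ?_
    rw [abs_mul, abs_mul, abs_of_nonneg hx, abs_of_nonneg hb]
    nlinarith [mul_le_mul hxb eLb (abs_nonneg _) hb, mul_le_mul_of_nonneg_left eLx hb]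
  have hcancel : Lb * Dx - Lx * Db = I / T * (x * (Lb - b / T * J) - b * (Lx - x / T * J))
      + Lb * (Dx - x / T * I) - Lx * (Db - b / T * I) := by
    field_simp; ring
  rw [hcancel]
  refine (abs_sub _ _).trans ((add_le_add (abs_add_le _ _) le_rfl).trans ?_)
  simp only [abs_mul]
  have h1 := mul_le_mul hI hmean (abs_nonneg _) hMf0
  have h2 := mul_le_mul hLb eDx (abs_nonneg _) (by positivity)
  have h3 := mul_le_mul hLx eDb (abs_nonneg _) (by positivity)
  linarith

end PeriodicIntegral

lemma integral_cos_int_mul (j : ℤ) : ∫ t in 0..π, cos (j * t) = if j = 0 then π else 0 := by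
  split_ifs with hj
  · simp [hj]
  · rw [intervalIntegral.integral_comp_mul_left (fun t => cos t) (Int.cast_ne_zero.2 hj)]
    simp [integral_cos, sin_int_mul_pi]

lemma integral_cos_nat_mul_mul_cos_nat_mul {m n : ℕ} (hn : n ≠ 0) :
    ∫ t in 0..π, cos (m * t) * cos (n * t) = if m = n then π / 2 else 0 := by
  have hprod : ∀ t : ℝ, cos (m * t) * cos (n * t)
      = cos (((m - n : ℤ) : ℝ) * t) / 2 + cos (((m + n : ℤ) : ℝ) * t) / 2 := by
    intro t; push_cast; rw [sub_mul, add_mul, cos_sub, cos_add]; ring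
  simp only [hprod]
  rw [intervalIntegral.integral_add (by apply Continuous.intervalIntegrable; fun_prop)
    (by apply Continuous.intervalIntegrable; fun_prop), intervalIntegral.integral_div,
    intervalIntegral.integral_div, integral_cos_int_mul, integral_cos_int_mul]
  have hmn : (m + n : ℤ) ≠ 0 := by omega
  by_cases h : m = n <;> simp [h, hn, hmn, sub_eq_zero]

def interp (p q : ℝ → ℝ) (u t : ℝ) : ℝ := (1 - u) * p t + u * q t

def arcDensity (p q : ℝ → ℝ) (u t : ℝ) : ℝ := √(1 + interp p q u t ^ 2)

def arcDensityDeriv (p q : ℝ → ℝ) (u t : ℝ) : ℝ :=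
  interp p q u t * (q t - p t) / arcDensity p q u t

section ArcDensity

variable {p q : ℝ → ℝ}

lemma continuous_interp (hp : Continuous p) (hq : Continuous q) (u : ℝ) :
    Continuous (interp p q u) := by
  unfold interp; fun_prop

lemma abs_interp_le {u : ℝ} (hu : u ∈ Icc (0 : ℝ) 1) {M t : ℝ} (hp : |p t| ≤ M)
    (hq : |q t| ≤ M) : |interp p q u t| ≤ M := by
  calc |interp p q u t| ≤ |(1 - u) * p t| + |u * q t| := abs_add_le _ _
    _ = (1 - u) * |p t| + u * |q t| := by
        rw [abs_mul, abs_mul, abs_of_nonneg (sub_nonneg.2 hu.2), abs_of_nonneg hu.1]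
    _ ≤ (1 - u) * M + u * M := by gcongr <;> linarith [hu.1, hu.2]
    _ = M := by ring

lemma arcDensity_pos (p q : ℝ → ℝ) (u t : ℝ) : 0 < arcDensity p q u t :=
  sqrt_pos.2 (by positivity)

lemma abs_interp_le_arcDensity (p q : ℝ → ℝ) (u t : ℝ) :
    |interp p q u t| ≤ arcDensity p q u t :=
  abs_le_sqrt (by linarith)

lemma arcDensity_le {u : ℝ} (hu : u ∈ Icc (0 : ℝ) 1) {M t : ℝ} (hp : |p t| ≤ M)
    (hq : |q t| ≤ M) : arcDensity p q u t ≤ 1 + M := by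
  have hI := abs_interp_le hu hp hq
  rw [arcDensity, sqrt_le_left (by linarith [abs_nonneg (interp p q u t)])]
  nlinarith [sq_abs (interp p q u t), abs_nonneg (interp p q u t)]

lemma abs_arcDensityDeriv_le (p q : ℝ → ℝ) (u t : ℝ) :
    |arcDensityDeriv p q u t| ≤ |q t - p t| := by
  rw [arcDensityDeriv, abs_div, abs_of_pos (arcDensity_pos p q u t), div_le_iff₀
    (arcDensity_pos p q u t), abs_mul, mul_comm]
  exact mul_le_mul_of_nonneg_left (abs_interp_le_arcDensity p q u t) (abs_nonneg _)

lemma hasDerivAt_arcDensity (p q : ℝ → ℝ) (u t : ℝ) :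
    HasDerivAt (fun v => arcDensity p q v t) (arcDensityDeriv p q u t) u := by
  have hinterp : HasDerivAt (fun v => interp p q v t) (q t - p t) u := by
    have : (fun v => interp p q v t) = fun v => p t + v * (q t - p t) := by
      funext v; simp only [interp]; ring
    simpa [this] using ((hasDerivAt_id u).mul_const (q t - p t)).const_add (p t)
  convert ((hinterp.fun_pow 2).const_add 1).sqrt (by positivity) using 1
  · rfl
  · rw [arcDensityDeriv, arcDensity]
    field_simp
    ring

lemma continuous_arcDensity (hp : Continuous p) (hq : Continuous q) (u : ℝ) :
    Continuous (arcDensity p q u) := by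
  unfold arcDensity interp; fun_prop

lemma continuous_arcDensityDeriv (hp : Continuous p) (hq : Continuous q) (u : ℝ) :
    Continuous (arcDensityDeriv p q u) := by
  exact ((continuous_interp hp hq u).mul (hq.sub hp)).div (continuous_arcDensity hp hq u)
    fun t => (arcDensity_pos p q u t).ne'

lemma periodic_arcDensity {T : ℝ} (hp : Periodic p T) (hq : Periodic q T) (u : ℝ) :
    Periodic (arcDensity p q u) T := by
  intro t; simp only [arcDensity, interp, hp t, hq t]

lemma periodic_arcDensityDeriv {T : ℝ} (hp : Periodic p T) (hq : Periodic q T) (u : ℝ) :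
    Periodic (arcDensityDeriv p q u) T := by
  intro t; simp only [arcDensityDeriv, interp, periodic_arcDensity hp hq u t, hp t, hq t]

lemma hasDerivAt_integral_arcDensity (hp : Continuous p) (hq : Continuous q) (x u : ℝ) :
    HasDerivAt (fun v => ∫ t in 0..x, arcDensity p q v t)
      (∫ t in 0..x, arcDensityDeriv p q u t) u :=
  (intervalIntegral.hasDerivAt_integral_of_dominated_loc_of_deriv_le (bound := fun t => |q t - p t|)
    univ_mem (Eventually.of_forall fun v => (continuous_arcDensity hp hq v).aestronglyMeasurable)
    ((continuous_arcDensity hp hq u).intervalIntegrable _ _)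
    (continuous_arcDensityDeriv hp hq u).aestronglyMeasurable
    (Eventually.of_forall fun t _ v _ => abs_arcDensityDeriv_le p q v t)
    ((hq.sub hp).abs.intervalIntegrable _ _)
    (Eventually.of_forall fun t _ v _ => hasDerivAt_arcDensity p q v t)).2

lemma abs_integral_arcDensity_mul_sub_le {T : ℝ} (hT : 0 < T) {M : ℝ} (hM : 1 ≤ M)
    (hp : Continuous p) (hp_per : Periodic p T) (hpM : ∀ t, |p t| ≤ M)
    (hq : Continuous q) (hq_per : Periodic q T) (hqM : ∀ t, |q t| ≤ M)
    {u : ℝ} (hu : u ∈ Icc (0 : ℝ) 1) {x b : ℝ} (hx : 0 ≤ x) (hxb : x ≤ b) :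
    |(∫ t in 0..b, arcDensity p q u t) * (∫ t in 0..x, arcDensityDeriv p q u t)
        - (∫ t in 0..x, arcDensity p q u t) * ∫ t in 0..b, arcDensityDeriv p q u t|
      ≤ 32 * b * T * M ^ 2 := by
  have hderiv (t : ℝ) : |arcDensityDeriv p q u t| ≤ 2 * M :=
    (abs_arcDensityDeriv_le p q u t).trans ((abs_sub _ _).trans (by linarith [hpM t, hqM t]))
  have hdensity (t : ℝ) : |arcDensity p q u t| ≤ 2 * M := by
    rw [abs_of_pos (arcDensity_pos p q u t)]
    linarith [arcDensity_le hu (hpM t) (hqM t)]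
  convert abs_integral_mul_integral_sub_le hT (continuous_arcDensityDeriv hp hq u)
    (periodic_arcDensityDeriv hp_per hq_per u) hderiv (continuous_arcDensity hp hq u)
    (periodic_arcDensity hp_per hq_per u) hdensity hx hxb using 1
  ring

lemma abs_integral_mul_le_integral_arcDensity (hp : Continuous p) (hq : Continuous q) (u : ℝ)
    {c : ℝ → ℝ} (hc : Continuous c) (hc1 : ∀ t, |c t| ≤ 1) {b : ℝ} (hb : 0 ≤ b) :
    |∫ t in 0..b, interp p q u t * c t| ≤ ∫ t in 0..b, arcDensity p q u t := by
  refine (intervalIntegral.abs_integral_le_integral_abs hb).trans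
    (intervalIntegral.integral_mono_on hb ?_
      ((continuous_arcDensity hp hq u).intervalIntegrable _ _) fun t _ => ?_)
  · exact ((continuous_interp hp hq u).mul hc).abs.intervalIntegrable _ _
  · rw [abs_mul]
    exact (mul_le_of_le_one_right (abs_nonneg _) (hc1 t)).trans (abs_interp_le_arcDensity p q u t)

end ArcDensity

lemma ySeq_succ (a : ℝ) (k : ℕ) : ySeq a (k + 1) = ySeq a k + a ^ (k + 1) :=
  Finset.sum_range_succ _ _

lemma ySeq_strictMono {a : ℝ} (ha : 0 < a) : StrictMono (ySeq a) :=
  strictMono_nat_of_lt_succ fun k => by rw [ySeq_succ]; linarith [pow_pos ha (k + 1)]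

lemma hasSum_yInf {a : ℝ} (ha0 : 0 ≤ a) (ha1 : a < 1) :
    HasSum (fun j : ℕ => a ^ (j + 1)) (yInf a) := by
  simpa [pow_succ', yInf, div_eq_mul_inv] using (hasSum_geometric_of_lt_one ha0 ha1).mul_left a

lemma ySeq_lt_yInf {a : ℝ} (ha0 : 0 < a) (ha1 : a < 1) (k : ℕ) : ySeq a k < yInf a :=
  (ySeq_strictMono ha0 k.lt_succ_self).trans_le
    (sum_le_hasSum _ (fun _ _ => (pow_pos ha0 _).le) (hasSum_yInf ha0.le ha1))

lemma exists_ge_ySeq_mem_Ico {a : ℝ} (ha0 : 0 < a) (ha1 : a < 1) {K : ℕ} {y : ℝ}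
    (hKy : ySeq a K ≤ y) (hy : y < yInf a) :
    ∃ k, K ≤ k ∧ y ∈ Ico (ySeq a k) (ySeq a (k + 1)) := by
  have hex : ∃ n, y < ySeq a n :=
    ((hasSum_yInf ha0.le ha1).tendsto_sum_nat.eventually (eventually_gt_nhds hy)).exists
  have hK : K < Nat.find hex :=
    (ySeq_strictMono ha0).lt_iff_lt.1 (hKy.trans_lt (Nat.find_spec hex))
  refine ⟨Nat.find hex - 1, by omega, not_lt.1 (Nat.find_min hex (by omega)), ?_⟩
  rw [Nat.sub_add_cancel (by omega)]
  exact Nat.find_spec hex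

/-- The paper's `φ_k`. -/
def phiSeq (a : ℝ) (φ : ℝ → ℝ) (k : ℕ) (y : ℝ) : ℝ :=
  φ ((y - ySeq a k) / a ^ (k + 1))

/-- Equal to `deriv (fSeq h l k)` only for `k ≠ 0`, since `fSeq h l 0 = 0`. -/
def fSeqDeriv (h l : ℝ) (k : ℕ) (t : ℝ) : ℝ := (h / l) ^ k * cos (t / l ^ k)

section Model

variable {a h l : ℝ} {φ : ℝ → ℝ} {k : ℕ} {y : ℝ}

lemma differentiable_phiSeq (hφ : Differentiable ℝ φ) (a : ℝ) (k : ℕ) :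
    Differentiable ℝ (phiSeq a φ k) := by
  unfold phiSeq; fun_prop

lemma abs_deriv_phiSeq_le (ha : 0 < a) (hφ : Differentiable ℝ φ) {C : ℝ}
    (hφC : ∀ t, |deriv φ t| ≤ C) (k : ℕ) (y : ℝ) :
    |deriv (phiSeq a φ k) y| ≤ C / a ^ (k + 1) := by
  have hd := (hφ _).hasDerivAt.comp y (((hasDerivAt_id y).sub_const (ySeq a k)).div_const
    (a ^ (k + 1)))
  rw [show phiSeq a φ k = φ ∘ fun s => (id s - ySeq a k) / a ^ (k + 1) from rfl, hd.deriv,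
    abs_mul, abs_div, abs_one, abs_of_pos (pow_pos ha _), mul_one_div]
  exact div_le_div_of_nonneg_right (hφC _) (pow_pos ha _).le

lemma hasDerivAt_fSeq (h l : ℝ) (hk : k ≠ 0) (x : ℝ) :
    HasDerivAt (fSeq h l k) (fSeqDeriv h l k x) x := by
  have hf : fSeq h l k = fun t => h ^ k * sin (t / l ^ k) := funext fun t => if_neg hk
  rw [hf, fSeqDeriv, div_pow]
  exact (((hasDerivAt_id' x).div_const (l ^ k)).sin.const_mul (h ^ k)).congr_deriv (by ring)

lemma continuous_fSeqDeriv (h l : ℝ) (k : ℕ) : Continuous (fSeqDeriv h l k) := by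
  unfold fSeqDeriv; fun_prop

lemma abs_fSeq_le (hh : 0 ≤ h) (l : ℝ) (k : ℕ) (x : ℝ) : |fSeq h l k x| ≤ h ^ k := by
  unfold fSeq
  split_ifs
  · simp [pow_nonneg hh]
  · rw [abs_mul, abs_of_nonneg (pow_nonneg hh k)]
    exact mul_le_of_le_one_right (pow_nonneg hh k) (abs_sin_le_one _)

lemma abs_fSeqDeriv_le (hr : 1 ≤ h / l) {m : ℕ} (hkm : k ≤ m) (t : ℝ) :
    |fSeqDeriv h l k t| ≤ (h / l) ^ m := by
  rw [fSeqDeriv, abs_mul, abs_of_nonneg (pow_nonneg (by linarith) k)]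
  exact (mul_le_of_le_one_right (pow_nonneg (by linarith) k) (abs_cos_le_one _)).trans
    (pow_le_pow_right₀ hr hkm)

lemma pos_of_eq_one_div {N : ℕ} (hN : 0 < N) (hl : l = 1 / N) : 0 < l := by
  rw [hl]; exact one_div_pos.2 (Nat.cast_pos.2 hN)

lemma div_pow_eq_natCast_mul {N : ℕ} (hl : l = 1 / N) (m : ℕ) (t : ℝ) :
    t / l ^ m = ((N ^ m : ℕ) : ℝ) * t := by
  subst hl; push_cast; rw [one_div, inv_pow, div_inv_eq_mul, mul_comm]

lemma periodic_fSeqDeriv {N : ℕ} (hN : 0 < N) (hl : l = 1 / N) (h : ℝ) {m : ℕ}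
    (hkm : k ≤ m) : Periodic (fSeqDeriv h l m) (2 * π * l ^ k) := by
  have hper := (cos_periodic.div_const (l ^ m)).nat_mul (N ^ (m - k))
  have hT : ((N ^ (m - k) : ℕ) : ℝ) * (2 * π * l ^ m) = 2 * π * l ^ k := by
    obtain ⟨j, rfl⟩ := Nat.exists_eq_add_of_le hkm
    subst hl
    have : (N : ℝ) ≠ 0 := by positivity
    simp only [Nat.add_sub_cancel_left, Nat.cast_pow, pow_add]
    have hNj : (N : ℝ) ^ j * (1 / N) ^ j = 1 := by
      rw [← mul_pow, mul_one_div_cancel this, one_pow]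
    linear_combination (2 * π * (1 / N : ℝ) ^ k) * hNj
  intro t
  simp only [fSeqDeriv, ← hT, hper t]

lemma psi_eq_interp (ha : 0 < a) (hy : y ∈ Ico (ySeq a k) (ySeq a (k + 1))) (x : ℝ) :
    psi a h l φ x y = interp (fSeq h l k) (fSeq h l (k + 1)) (phiSeq a φ k y) x := by
  have hex : ∃ j : ℕ, ySeq a j ≤ y ∧ y < ySeq a (j + 1) := ⟨k, hy⟩
  have h1 := (ySeq_strictMono ha).lt_iff_lt.1 (hex.choose_spec.1.trans_lt hy.2)
  have h2 := (ySeq_strictMono ha).lt_iff_lt.1 (hy.1.trans_lt hex.choose_spec.2)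
  rw [psi, dif_pos hex, show hex.choose = k by omega]
  rfl

lemma psi₁_eq (ha : 0 < a) (hk : k ≠ 0) (hy : y ∈ Ico (ySeq a k) (ySeq a (k + 1))) (x : ℝ) :
    psi₁ a h l φ x y = interp (fSeqDeriv h l k) (fSeqDeriv h l (k + 1)) (phiSeq a φ k y) x := by
  simp only [psi₁, psi_eq_interp ha hy, interp]
  exact (((hasDerivAt_fSeq h l hk x).const_mul _).add
    ((hasDerivAt_fSeq h l k.succ_ne_zero x).const_mul _)).deriv

lemma psi₂_eq (ha : 0 < a) (hφ : Differentiable ℝ φ)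
    (hy : y ∈ Ioo (ySeq a k) (ySeq a (k + 1))) (x : ℝ) :
    psi₂ a h l φ x y = deriv (phiSeq a φ k) y * (fSeq h l (k + 1) x - fSeq h l k x) := by
  have heq : (fun s => psi a h l φ x s) =ᶠ[𝓝 y]
      fun s => fSeq h l k x + phiSeq a φ k s * (fSeq h l (k + 1) x - fSeq h l k x) := by
    filter_upwards [isOpen_Ioo.mem_nhds hy] with s hs
    rw [psi_eq_interp ha (Ioo_subset_Ico_self hs), interp]
    ring
  rw [psi₂, heq.deriv_eq]
  exact (((differentiable_phiSeq hφ a k y).hasDerivAt.mul_const _).const_add _).deriv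

lemma arc_eq (ha : 0 < a) (hk : k ≠ 0) (hy : y ∈ Ico (ySeq a k) (ySeq a (k + 1))) (x : ℝ) :
    arc a h l φ x y = ∫ t in 0..x,
      arcDensity (fSeqDeriv h l k) (fSeqDeriv h l (k + 1)) (phiSeq a φ k y) t := by
  simp only [arc, arcDensity, psi₁_eq ha hk hy]

lemma hasDerivAt_arc (ha : 0 < a) (hφ : Differentiable ℝ φ) (hk : k ≠ 0)
    (hy : y ∈ Ioo (ySeq a k) (ySeq a (k + 1))) (x : ℝ) :
    HasDerivAt (fun s => arc a h l φ x s)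
      ((∫ t in 0..x, arcDensityDeriv (fSeqDeriv h l k) (fSeqDeriv h l (k + 1))
        (phiSeq a φ k y) t) * deriv (phiSeq a φ k) y) y := by
  have heq : (fun s => arc a h l φ x s) =ᶠ[𝓝 y] (fun v => ∫ t in 0..x,
      arcDensity (fSeqDeriv h l k) (fSeqDeriv h l (k + 1)) v t) ∘ phiSeq a φ k := by
    filter_upwards [isOpen_Ioo.mem_nhds hy] with s hs using arc_eq ha hk (Ioo_subset_Ico_self hs) x
  exact ((hasDerivAt_integral_arcDensity (continuous_fSeqDeriv h l k)
    (continuous_fSeqDeriv h l (k + 1)) x _).comp y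
    (differentiable_phiSeq hφ a k y).hasDerivAt).congr_of_eventuallyEq heq

end Model

section StripBounds

variable {a h l : ℝ} {φ : ℝ → ℝ} {k N : ℕ} {y : ℝ}

lemma integral_interp_fSeqDeriv_mul_cos (hN : 1 < N) (hl : l = 1 / N) (u : ℝ) (k j : ℕ) :
    ∫ t in 0..π, interp (fSeqDeriv h l k) (fSeqDeriv h l (k + 1)) u t * cos (t / l ^ j)
      = (1 - u) * (h / l) ^ k * (if k = j then π / 2 else 0)
        + u * (h / l) ^ (k + 1) * (if k + 1 = j then π / 2 else 0) := by
  have hinj : ∀ m n, N ^ m = N ^ n ↔ m = n := fun _ _ => (Nat.pow_right_injective hN).eq_iff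
  simp only [interp, fSeqDeriv, div_pow_eq_natCast_mul hl, add_mul, mul_assoc]
  rw [intervalIntegral.integral_add (by apply Continuous.intervalIntegrable; fun_prop)
      (by apply Continuous.intervalIntegrable; fun_prop),
    intervalIntegral.integral_const_mul, intervalIntegral.integral_const_mul,
    intervalIntegral.integral_const_mul, intervalIntegral.integral_const_mul,
    integral_cos_nat_mul_mul_cos_nat_mul (pow_pos (by omega) j).ne',
    integral_cos_nat_mul_mul_cos_nat_mul (pow_pos (by omega) j).ne']
  simp only [hinj]

lemma pi_div_four_mul_pow_le_len (ha : 0 < a) (hN : 1 < N) (hl : l = 1 / N) (hr : 1 ≤ h / l)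
    (hφ01 : ∀ t, φ t ∈ Icc (0 : ℝ) 1) (hk : k ≠ 0)
    (hy : y ∈ Ico (ySeq a k) (ySeq a (k + 1))) :
    π / 4 * (h / l) ^ k ≤ len a h l φ y := by
  set u := phiSeq a φ k y
  have hu : u ∈ Icc (0 : ℝ) 1 := hφ01 _
  have hproj (j : ℕ) : |∫ t in 0..π, interp (fSeqDeriv h l k) (fSeqDeriv h l (k + 1)) u t
      * cos (t / l ^ j)| ≤ len a h l φ y := by
    rw [len, arc_eq ha hk hy]
    exact abs_integral_mul_le_integral_arcDensity (continuous_fSeqDeriv h l k)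
      (continuous_fSeqDeriv h l (k + 1)) u (by fun_prop) (fun _ => abs_cos_le_one _) pi_pos.le
  have hrk0 : 0 ≤ (h / l) ^ k := pow_nonneg (by linarith) k
  have hrk : (h / l) ^ k ≤ (h / l) ^ (k + 1) := pow_le_pow_right₀ hr k.le_succ
  rcases le_or_gt u (1 / 2) with hu2 | hu2
  · refine le_trans ?_ ((le_abs_self _).trans (hproj k))
    rw [integral_interp_fSeqDeriv_mul_cos hN hl u k k]
    simp only [↓reduceIte, if_neg k.succ_ne_self, mul_zero, add_zero]
    nlinarith [mul_nonneg (mul_nonneg (by linarith : (0 : ℝ) ≤ 1 / 2 - u) hrk0) pi_pos.le]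
  · refine le_trans ?_ ((le_abs_self _).trans (hproj (k + 1)))
    rw [integral_interp_fSeqDeriv_mul_cos hN hl u k (k + 1)]
    simp only [↓reduceIte, if_neg (k.succ_ne_self).symm, mul_zero, zero_add]
    nlinarith [mul_le_mul hu2.le hrk hrk0 hu.1, pi_pos]

lemma one_div_len_le (ha : 0 < a) (hN : 1 < N) (hl : l = 1 / N) (hr : 1 ≤ h / l)
    (hφ01 : ∀ t, φ t ∈ Icc (0 : ℝ) 1) (hk : k ≠ 0)
    (hy : y ∈ Ico (ySeq a k) (ySeq a (k + 1))) :
    1 / len a h l φ y ≤ 4 / π * (l / h) ^ k := by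
  have hl0 := pos_of_eq_one_div (zero_lt_one.trans hN) hl
  have hh0 : 0 < h := by linarith [(one_le_div hl0).1 hr]
  calc 1 / len a h l φ y ≤ 1 / (π / 4 * (h / l) ^ k) :=
        one_div_le_one_div_of_le (by positivity)
          (pi_div_four_mul_pow_le_len ha hN hl hr hφ01 hk hy)
    _ = 4 / π * (l / h) ^ k := by rw [div_pow, div_pow]; field_simp

lemma abs_mul_div_sqrt_one_add_sq_add_sq_le (p q : ℝ) :
    |p * q| / √(1 + p ^ 2 + q ^ 2) ≤ |q| := by
  rw [div_le_iff₀ (sqrt_pos.2 (by positivity)), abs_mul, mul_comm]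
  exact mul_le_mul_of_nonneg_left (abs_le_sqrt (by nlinarith [sq_nonneg q])) (abs_nonneg q)

lemma mixed_coefficient_le (ha : 0 < a) (hN : 1 < N) (hl : l = 1 / N) (hr : 1 ≤ h / l)
    (hφ : Differentiable ℝ φ) (hφ01 : ∀ t, φ t ∈ Icc (0 : ℝ) 1) {C : ℝ}
    (hφC : ∀ t, |deriv φ t| ≤ C) (hk : k ≠ 0) (hy : y ∈ Ioo (ySeq a k) (ySeq a (k + 1)))
    (x : ℝ) :
    |psi₁ a h l φ x y * psi₂ a h l φ x y| /
        (√(1 + psi₁ a h l φ x y ^ 2 + psi₂ a h l φ x y ^ 2) * len a h l φ y)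
      ≤ 4 * C * (1 + h) / (π * a) * (l / a) ^ k := by
  have hl0 := pos_of_eq_one_div (zero_lt_one.trans hN) hl
  have hh0 : 0 < h := by linarith [(one_le_div hl0).1 hr]
  have hC : 0 ≤ C := (abs_nonneg _).trans (hφC 0)
  have hL := pi_div_four_mul_pow_le_len ha hN hl hr hφ01 hk (Ioo_subset_Ico_self hy)
  have hψ₂ : |psi₂ a h l φ x y| ≤ C / a ^ (k + 1) * (h ^ k + h ^ (k + 1)) := by
    rw [psi₂_eq ha hφ hy, abs_mul]
    refine mul_le_mul (abs_deriv_phiSeq_le ha hφ hφC k y) ((abs_sub _ _).trans ?_) (abs_nonneg _)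
      (by positivity)
    linarith [abs_fSeq_le hh0.le l k x, abs_fSeq_le hh0.le l (k + 1) x]
  rw [← div_div]
  calc _ ≤ |psi₂ a h l φ x y| / len a h l φ y :=
        div_le_div_of_nonneg_right (abs_mul_div_sqrt_one_add_sq_add_sq_le _ _)
          ((by positivity : (0 : ℝ) ≤ π / 4 * (h / l) ^ k).trans hL)
    _ ≤ C / a ^ (k + 1) * (h ^ k + h ^ (k + 1)) / (π / 4 * (h / l) ^ k) :=
        div_le_div₀ (by positivity) hψ₂ (by positivity) hL
    _ = 4 * C * (1 + h) / (π * a) * (l / a) ^ k := by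
        rw [div_pow, div_pow]; field_simp; ring

lemma cross_coefficient_le (ha : 0 < a) (hN : 1 < N) (hl : l = 1 / N) (hr : 1 ≤ h / l)
    (hφ : Differentiable ℝ φ) (hφ01 : ∀ t, φ t ∈ Icc (0 : ℝ) 1) {C : ℝ}
    (hφC : ∀ t, |deriv φ t| ≤ C) (hk : k ≠ 0) (hy : y ∈ Ioo (ySeq a k) (ySeq a (k + 1)))
    {x : ℝ} (hx : x ∈ Icc 0 π) :
    |len a h l φ y * deriv (fun s => arc a h l φ x s) y
        - arc a h l φ x y * deriv (len a h l φ) y| / len a h l φ y ^ 2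
      ≤ 1024 * C * (h / l) ^ 2 / a * (l / a) ^ k := by
  have hl0 := pos_of_eq_one_div (zero_lt_one.trans hN) hl
  have hh0 : 0 < h := by linarith [(one_le_div hl0).1 hr]
  have hC : 0 ≤ C := (abs_nonneg _).trans (hφC 0)
  have hL := pi_div_four_mul_pow_le_len ha hN hl hr hφ01 hk (Ioo_subset_Ico_self hy)
  have hcross := abs_integral_arcDensity_mul_sub_le (by positivity : 0 < 2 * π * l ^ k)
    (one_le_pow₀ hr : 1 ≤ (h / l) ^ (k + 1))
    (continuous_fSeqDeriv h l k) (periodic_fSeqDeriv (by omega) hl h le_rfl)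
    (abs_fSeqDeriv_le hr k.le_succ) (continuous_fSeqDeriv h l (k + 1))
    (periodic_fSeqDeriv (by omega) hl h k.le_succ) (abs_fSeqDeriv_le hr le_rfl)
    (u := phiSeq a φ k y) (hφ01 _) hx.1 hx.2
  have hnum : |len a h l φ y * deriv (fun s => arc a h l φ x s) y
        - arc a h l φ x y * deriv (len a h l φ) y|
      ≤ C / a ^ (k + 1) * (32 * π * (2 * π * l ^ k) * ((h / l) ^ (k + 1)) ^ 2) := by
    have hDπ : deriv (len a h l φ) y = _ := (hasDerivAt_arc ha hφ hk hy π).deriv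
    rw [(hasDerivAt_arc ha hφ hk hy x).deriv, hDπ, len, arc_eq ha hk (Ioo_subset_Ico_self hy),
      arc_eq ha hk (Ioo_subset_Ico_self hy), ← mul_assoc, ← mul_assoc, ← sub_mul, abs_mul,
      mul_comm |_|]
    exact mul_le_mul (abs_deriv_phiSeq_le ha hφ hφC k y) hcross (abs_nonneg _) (by positivity)
  calc _ ≤ C / a ^ (k + 1) * (32 * π * (2 * π * l ^ k) * ((h / l) ^ (k + 1)) ^ 2)
        / (π / 4 * (h / l) ^ k) ^ 2 :=
        div_le_div₀ (by positivity) hnum (by positivity) (pow_le_pow_left₀ (by positivity) hL 2)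
    _ = 1024 * C * (h / l) ^ 2 / a * (l / a) ^ k := by
        simp only [div_pow]; field_simp; ring

end StripBounds

lemma eventually_form_coefficients_lt {a h l : ℝ} {N : ℕ} (ha : 0 < a) (hN : 1 < N)
    (hl : l = 1 / N) (hla : l < a) (hlh : l < h) {φ : ℝ → ℝ} (hφ : Differentiable ℝ φ)
    (hφ01 : ∀ t, φ t ∈ Icc (0 : ℝ) 1) {C : ℝ} (hφC : ∀ t, |deriv φ t| ≤ C)
    {ε : ℝ} (hε : 0 < ε) :
    ∀ᶠ k in atTop, ∀ y ∈ Ioo (ySeq a k) (ySeq a (k + 1)), ∀ x ∈ Ioo 0 π,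
      1 / len a h l φ y < ε ∧
      |psi₁ a h l φ x y * psi₂ a h l φ x y| /
          (√(1 + psi₁ a h l φ x y ^ 2 + psi₂ a h l φ x y ^ 2) * len a h l φ y) < ε ∧
      |len a h l φ y * deriv (fun s => arc a h l φ x s) y
          - arc a h l φ x y * deriv (len a h l φ) y| / len a h l φ y ^ 2 < ε := by
  have hl0 := pos_of_eq_one_div (zero_lt_one.trans hN) hl
  have hr : 1 ≤ h / l := (one_le_div hl0).2 hlh.le
  have hgeom (c : ℝ) {ρ : ℝ} (hρ0 : 0 ≤ ρ) (hρ1 : ρ < 1) :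
      ∀ᶠ k : ℕ in atTop, c * ρ ^ k < ε := by
    have hlim := (tendsto_pow_atTop_nhds_zero_of_lt_one hρ0 hρ1).const_mul c
    rw [mul_zero] at hlim
    exact hlim.eventually (gt_mem_nhds hε)
  filter_upwards [eventually_ne_atTop 0,
    hgeom (4 / π) (div_nonneg hl0.le (hl0.trans hlh).le) ((div_lt_one (hl0.trans hlh)).2 hlh),
    hgeom (4 * C * (1 + h) / (π * a)) (div_nonneg hl0.le ha.le) ((div_lt_one ha).2 hla),
    hgeom (1024 * C * (h / l) ^ 2 / a) (div_nonneg hl0.le ha.le) ((div_lt_one ha).2 hla)]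
    with k hk ha_lt hb_lt hc_lt y hy x hx
  exact ⟨(one_div_len_le ha hN hl hr hφ01 hk (Ioo_subset_Ico_self hy)).trans_lt ha_lt,
    (mixed_coefficient_le ha hN hl hr hφ hφ01 hφC hk hy x).trans_lt hb_lt,
    (cross_coefficient_le ha hN hl hr hφ hφ01 hφC hk hy
      (Ioo_subset_Icc_self hx)).trans_lt hc_lt⟩

theorem form_coefficients_tendto_zero_general (a h l : ℝ) (ha0 : 0 < a) (ha1 : a < 1)
    (hl1 : l < 1) (hlN : ∃ N : ℕ, 0 < N ∧ l = 1 / N)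
    (φ : ℝ → ℝ) (hφsmooth : ContDiff ℝ (⊤ : ℕ∞) φ)
    (hφ01 : ∀ t, φ t ∈ Set.Icc (0:ℝ) 1)
    (hφd0 : ∀ t, 0 ≤ deriv φ t) (hφd2 : ∀ t, deriv φ t ≤ 2)
    (hla : l < a) (hlh : l < h) :
    ∀ ε : ℝ, 0 < ε → ∃ y' : ℝ, y' < yInf a ∧
      ∀ y : ℝ, y' < y → y < yInf a → (∀ k : ℕ, y ≠ ySeq a k) →
        ∀ x : ℝ, 0 < x → x < π →
          1 / len a h l φ y < ε ∧
          |psi₁ a h l φ x y * psi₂ a h l φ x y| /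
              (Real.sqrt (1 + psi₁ a h l φ x y ^ 2 + psi₂ a h l φ x y ^ 2)
                * len a h l φ y) < ε ∧
          |len a h l φ y * deriv (fun s => arc a h l φ x s) y
              - arc a h l φ x y * deriv (len a h l φ) y| / len a h l φ y ^ 2 < ε := by
  intro ε hε
  obtain ⟨N, hN0, hl⟩ := hlN
  have hN : 1 < N := by
    rcases (Nat.one_le_iff_ne_zero.2 hN0.ne').eq_or_lt with rfl | hN
    · norm_num [hl] at hl1
    · exact hN
  have hφ2 (t : ℝ) : |deriv φ t| ≤ 2 := abs_le.2 ⟨by linarith [hφd0 t], hφd2 t⟩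
  obtain ⟨K, hK⟩ := eventually_atTop.1 <| eventually_form_coefficients_lt ha0 hN hl hla hlh
    (hφsmooth.differentiable (by simp)) hφ01 hφ2 hε
  refine ⟨ySeq a K, ySeq_lt_yInf ha0 ha1 K, fun y hKy hy hy_ne x hx0 hxπ => ?_⟩
  obtain ⟨k, hKk, hyk⟩ := exists_ge_ySeq_mem_Ico ha0 ha1 hKy.le hy
  exact hK k hKk y ⟨hyk.1.lt_of_ne (hy_ne k).symm, hyk.2⟩ x ⟨hx0, hxπ⟩

/-- Assume `λ < a` and `λ < h`. The three coefficients of the pulled-back `1`-form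
`ω_M = π^*(du)` in an orthonormal tangent frame of the graph of `ψ` all tend to `0`
uniformly in `x` as `y → y_∞`: `1/L(y)`, the mixed term
`|∂₁ψ ∂₂ψ| / (√(1 + ∂₁ψ² + ∂₂ψ²) L(y))`, and the cancellation term
`|L(y) ∂_y L(x,y) - L(x,y) ∂_y L(y)|/L(y)²`. -/
theorem form_coefficients_tendto_zero (a h l : ℝ) (ha0 : 0 < a) (ha1 : a < 1) (hh0 : 0 < h) (hh1 : h < 1)
    (hl0 : 0 < l) (hl1 : l < 1) (hlN : ∃ N : ℕ, 0 < N ∧ l = 1 / N)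
    (φ : ℝ → ℝ) (hφsmooth : ContDiff ℝ (⊤ : ℕ∞) φ) (hφmono : Monotone φ)
    (hφ01 : ∀ t, φ t ∈ Set.Icc (0:ℝ) 1)
    (hφd0 : ∀ t, 0 ≤ deriv φ t) (hφd2 : ∀ t, deriv φ t ≤ 2)
    (hφ0 : ∃ ε > 0, ∀ t < ε, φ t = 0) (hφ1 : ∃ ε > 0, ∀ t > 1 - ε, φ t = 1)
    (hla : l < a) (hlh : l < h) :
    ∀ ε : ℝ, 0 < ε → ∃ y' : ℝ, y' < yInf a ∧
      ∀ y : ℝ, y' < y → y < yInf a → (∀ k : ℕ, y ≠ ySeq a k) →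
        ∀ x : ℝ, 0 < x → x < π →
          1 / len a h l φ y < ε ∧
          |psi₁ a h l φ x y * psi₂ a h l φ x y| /
              (Real.sqrt (1 + psi₁ a h l φ x y ^ 2 + psi₂ a h l φ x y ^ 2)
                * len a h l φ y) < ε ∧
          |len a h l φ y * deriv (fun s => arc a h l φ x s) y
              - arc a h l φ x y * deriv (len a h l φ) y| / len a h l φ y ^ 2 < ε :=
  form_coefficients_tendto_zero_general a h l ha0 ha1 hl1 hlN φ hφsmooth hφ01 hφd0 hφd2 hla hlh

end StokesCounterexample
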